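/- The set of isolated points of R * A_n consists exactly of those functions f ∈ R * A_n with |supp f| = n. -/

import Mathlib

open Filter

def RA (R : Set ℝ) (n : ℕ) : Set (ℕ → ℝ) :=
  {f | (∀ i, f i ∈ R) ∧ ∃ F : Finset ℕ, F.card ≤ n ∧ ∀ i, f i ≠ 0 → i ∈ F}

/-! A point with fewer than `n` nonzero coordinates is the limit, as `j → ∞`, of the points
obtained by setting its `j`-th coordinate to a fixed nonzero `r ∈ R`; these stay in `R * A_n`.
A point with exactly `n` nonzero coordinates is isolated: those coordinates are isolated points
of `R`, so nearby points of `R * A_n` agree with it there, and having no room for further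
nonzero coordinates they coincide with it. -/

open Topology Set Function

theorem tendsto_update_cofinite_nhds {ι X : Type*} [DecidableEq ι] [TopologicalSpace X]
    (f g : ι → X) :
    Tendsto (fun j => update f j (g j)) cofinite (𝓝 f) :=
  tendsto_pi_nhds.2 fun i => tendsto_const_nhds.congr' <|
    (eventually_cofinite_ne i).mono fun _ hj => (update_of_ne hj.symm _ _).symm

theorem exists_finset_support_card_eq_iff {ι M : Type*} [Zero M] (f : ι → M) (n : ℕ) :
    (∃ F : Finset ι, (∀ i, f i ≠ 0 ↔ i ∈ F) ∧ F.card = n) ↔ (support f).encard = n := by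
  constructor
  · rintro ⟨F, hF, rfl⟩
    rw [show support f = F from Set.ext hF, encard_coe_eq_coe_finsetCard]
  · intro h
    have hfin := finite_of_encard_eq_coe h
    refine ⟨hfin.toFinset, fun i => by simp, ?_⟩
    rw [← Nat.cast_inj (R := ℕ∞), ← hfin.encard_eq_coe_toFinset_card, h]

theorem eq_of_eqOn_support_of_encard_le {ι M : Type*} [Zero M] {f g : ι → M}
    (hfin : (support f).Finite) (hle : (support g).encard ≤ (support f).encard)
    (heq : EqOn g f (support f)) : g = f := by
  have hsub : support f ⊆ support g := fun i hi => by rwa [mem_support, heq hi]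
  have hsupp : support f = support g := hfin.eq_of_subset_of_encard_le hsub hle
  funext i
  by_cases hi : i ∈ support f
  · exact heq hi
  · have hgi : i ∉ support g := hsupp ▸ hi
    rw [notMem_support.1 hi, notMem_support.1 hgi]

theorem mem_RA_iff {R : Set ℝ} {n : ℕ} {f : ℕ → ℝ} :
    f ∈ RA R n ↔ (∀ i, f i ∈ R) ∧ (support f).encard ≤ n := by
  refine and_congr_right fun _ => ⟨?_, fun h => ?_⟩
  · rintro ⟨F, hcard, hF⟩
    exact (encard_le_encard hF).trans (by simpa using hcard)
  · have hfin := finite_of_encard_le_coe h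
    refine ⟨hfin.toFinset, ?_, fun i hi => by simpa using hi⟩
    rwa [← Nat.cast_le (α := ℕ∞), ← hfin.encard_eq_coe_toFinset_card]

theorem update_mem_RA {R : Set ℝ} {n : ℕ} {f : ℕ → ℝ} (hfR : ∀ i, f i ∈ R)
    (hlt : (support f).encard < n) {r : ℝ} (hr : r ∈ R) (hr0 : r ≠ 0) (j : ℕ) :
    update f j r ∈ RA R n := by
  refine mem_RA_iff.2 ⟨fun i => ?_, ?_⟩
  · rcases eq_or_ne i j with rfl | hij
    · simpa using hr
    · simpa [update_of_ne hij] using hfR i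
  · calc (support (update f j r)).encard = (insert j (support f)).encard := by
          rw [support_update_of_ne_zero f j hr0]
      _ ≤ (support f).encard + 1 := encard_insert_le _ _
      _ ≤ n := Order.add_one_le_of_lt hlt

theorem accPt_RA_of_encard_support_lt {R : Set ℝ} {n : ℕ} {f : ℕ → ℝ} (hfR : ∀ i, f i ∈ R)
    (hlt : (support f).encard < n) {r : ℝ} (hr : r ∈ R) (hr0 : r ≠ 0) :
    AccPt f (𝓟 (RA R n)) := by
  have hfin : (support f).Finite := finite_of_encard_le_coe hlt.le
  have hnear : ∀ᶠ j in cofinite, update f j r ≠ f ∧ update f j r ∈ RA R n :=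
    hfin.eventually_cofinite_notMem.mono fun j hj =>
      ⟨fun h => hj (by rw [mem_support, ← h, update_self]; exact hr0),
        update_mem_RA hfR hlt hr hr0 j⟩
  exact accPt_iff_frequently.2 ((tendsto_update_cofinite_nhds f fun _ => r).frequently
    hnear.frequently)

theorem not_accPt_RA_of_encard_support_eq {R : Set ℝ} {n : ℕ} {f : ℕ → ℝ}
    (hiso : ∀ x ≠ 0, ¬ AccPt x (𝓟 R)) (hn : (support f).encard = n) :
    ¬ AccPt f (𝓟 (RA R n)) := by
  have hfin : (support f).Finite := finite_of_encard_eq_coe hn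
  have hagree : ∀ᶠ g in 𝓝 f, ∀ i ∈ support f, g i ∈ R → g i = f i := by
    refine (hfin.eventually_all).2 fun i hi => ?_
    have hloc : ∀ᶠ x in 𝓝 (f i), x ∈ R → x = f i :=
      (not_frequently.1 (accPt_iff_frequently.not.1 (hiso _ hi))).mono
        fun x hx hxR => not_not.1 fun hne => hx ⟨hne, hxR⟩
    exact (continuous_apply i).continuousAt.eventually hloc
  rw [accPt_iff_frequently, not_frequently]
  filter_upwards [hagree] with g hg
  rintro ⟨hne, hgRA⟩
  obtain ⟨hgR, hgn⟩ := mem_RA_iff.1 hgRA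
  exact hne (eq_of_eqOn_support_of_encard_le hfin (hn ▸ hgn) fun i hi => hg i hi (hgR i))

theorem isolated_RA_iff_general (R : Set ℝ)
    (hne : R ≠ {0})
    (hacc : ∀ x : ℝ, AccPt x (𝓟 R) ↔ x = 0)
    (n : ℕ) (f : ℕ → ℝ) (hf : f ∈ RA R n) :
    ¬ AccPt f (𝓟 (RA R n)) ↔ ∃ F : Finset ℕ, (∀ i, f i ≠ 0 ↔ i ∈ F) ∧ F.card = n := by
  obtain ⟨hfR, hfn⟩ := mem_RA_iff.1 hf
  rw [exists_finset_support_card_eq_iff]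
  refine ⟨fun hisol => ?_, not_accPt_RA_of_encard_support_eq fun x hx h => hx ((hacc x).1 h)⟩
  obtain ⟨r, hr, hr0⟩ : ∃ r ∈ R, r ≠ 0 := by
    by_contra! h
    exact hne ((nonempty_of_mem (hfR 0)).subset_singleton_iff.1 h)
  by_contra hlt
  exact hisol (accPt_RA_of_encard_support_lt hfR (lt_of_le_of_ne hfn hlt) hr hr0)

/-- A point of `R * 𝒜_n` is isolated in `R * 𝒜_n` exactly when its support has
cardinality exactly `n`. -/
theorem isolated_RA_iff (R : Set ℝ) (hc : R.Countable) (hcomp : IsCompact R)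
    (hpos : R ⊆ Set.Ici 0) (h0 : (0 : ℝ) ∈ R) (hne : R ≠ {0})
    (hacc : ∀ x : ℝ, AccPt x (𝓟 R) ↔ x = 0)
    (n : ℕ) (f : ℕ → ℝ) (hf : f ∈ RA R n) :
    ¬ AccPt f (𝓟 (RA R n)) ↔ ∃ F : Finset ℕ, (∀ i, f i ≠ 0 ↔ i ∈ F) ∧ F.card = n :=
  isolated_RA_iff_general R hne hacc n f hf
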